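/- Let p ∈ ℂ with |p| < 1 and let x, y, w, z be nonzero complex numbers. Then the theta functions satisfy the addition formula θ(xw;p) θ(x/w;p) θ(yz;p) θ(y/z;p) − θ(xz;p) θ(x/z;p) θ(yw;p) θ(y/w;p) = (y/w) · θ(xy;p) θ(x/y;p) θ(wz;p) θ(w/z;p). -/

import Mathlib

/-- The infinite q-Pochhammer symbol `(a;b)_∞ = ∏_{n=0}^∞ (1 - a bⁿ)`. -/
noncomputable def qPochInf (a b : ℂ) : ℂ := ∏' n : ℕ, (1 - a * b ^ n)

/-- The theta function `θ(z;p) = (z;p)_∞ (p z⁻¹;p)_∞`. -/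
noncomputable def theta (z p : ℂ) : ℂ := qPochInf z p * qPochInf (p * z⁻¹) p

/-!
By the Jacobi triple product, `θ(u;p) (p;p)_∞ = ∑_{j ∈ ℤ} (-1)^j p^(j choose 2) u^j` for `u ≠ 0`;
it follows from the `q`-binomial theorem for `∏_{i<2N} (1 - u p^(i-N))` by letting `N → ∞`
(Tannery's theorem). As the addition formula is homogeneous of degree four in `θ`, it suffices
to prove it for the theta series. Putting `m = a + b`, `n = a - b`, the product of the series at
`uv` and `u/v` is a double series over `m ≡ n (mod 2)` with terms
`(-1)^m p^((m² + n² - 2m)/4) u^m v^n`. So each of the three quadruple products is a series in the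
monomials `x^X y^Y w^W z^Z` with one and the same power of `p`, and the identity holds term by
term: comparing the parity conditions and signs is a finite check.
-/

open Filter Finset Topology

lemma Nat.choose_two_succ (k : ℕ) : (k + 1).choose 2 = k.choose 2 + k := by
  rw [Nat.choose_succ_succ, Nat.choose_one_right, add_comm]

lemma sum_range_add_one_eq_choose_two (n : ℕ) : ∑ i ∈ range n, (i + 1) = (n + 1).choose 2 := by
  induction n with
  | zero => rfl
  | succ n ih => rw [sum_range_succ, ih, Nat.choose_two_succ (n + 1)]

lemma two_mul_ringChoose_two (j : ℤ) : 2 * Ring.choose j 2 = j * (j - 1) := by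
  simpa [descPochhammer_succ_right, Polynomial.smeval_mul, Polynomial.smeval_X,
    Polynomial.smeval_sub] using (Ring.descPochhammer_eq_factorial_smul_choose j 2).symm

lemma ringChoose_two_neg (j : ℤ) : Ring.choose (-j) 2 = Ring.choose j 2 + j := by
  have h₁ := two_mul_ringChoose_two (-j)
  have h₂ := two_mul_ringChoose_two j
  linarith

lemma ringChoose_two_natCast_sub (k n : ℕ) :
    Ring.choose ((k : ℤ) - n) 2 =
      ((k.choose 2 : ℕ) : ℤ) - ((n * k : ℕ) : ℤ) + ((n + 1).choose 2 : ℕ) := by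
  have h₁ := two_mul_ringChoose_two ((k : ℤ) - n)
  have h₂ := two_mul_ringChoose_two k
  have h₃ := two_mul_ringChoose_two (n + 1)
  rw [Ring.choose_natCast] at h₂
  rw [← Nat.cast_succ, Ring.choose_natCast] at h₃
  push_cast at h₃ ⊢
  linarith

section GaussBinom

variable {R : Type*}

def gaussBinom [CommSemiring R] (q : R) : ℕ → ℕ → R
  | _, 0 => 1
  | 0, _ + 1 => 0
  | n + 1, k + 1 => gaussBinom q n k + q ^ (k + 1) * gaussBinom q n (k + 1)

def qPoch [CommRing R] (q : R) (n : ℕ) : R := ∏ i ∈ range n, (1 - q ^ (i + 1))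

section CommSemiring

variable [CommSemiring R] (q : R)

@[simp] lemma gaussBinom_zero_right (n : ℕ) : gaussBinom q n 0 = 1 := by cases n <;> rfl

lemma gaussBinom_succ_succ (n k : ℕ) :
    gaussBinom q (n + 1) (k + 1) = gaussBinom q n k + q ^ (k + 1) * gaussBinom q n (k + 1) :=
  rfl

lemma gaussBinom_eq_zero_of_lt {n k : ℕ} (h : n < k) : gaussBinom q n k = 0 := by
  induction n generalizing k with
  | zero => obtain ⟨k, rfl⟩ := Nat.exists_eq_succ_of_ne_zero h.ne'; rfl
  | succ n ih =>
    obtain ⟨k, rfl⟩ := Nat.exists_eq_succ_of_ne_zero (Nat.ne_zero_of_lt h)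
    rw [gaussBinom_succ_succ, ih (by omega), ih (by omega), mul_zero, add_zero]

/-- The `q`-binomial theorem. -/
theorem prod_range_one_add_mul_pow (u : R) (n : ℕ) :
    ∏ i ∈ range n, (1 + u * q ^ i) =
      ∑ k ∈ range (n + 1), gaussBinom q n k * q ^ k.choose 2 * u ^ k := by
  induction n generalizing u with
  | zero => simp
  | succ n ih =>
    set T : ℕ → R := fun k => gaussBinom q n k * q ^ (k + 1).choose 2 * u ^ k
    set V : ℕ → R := fun k => gaussBinom q n k * q ^ (k + 1).choose 2 * u ^ (k + 1)
    have hT : ∑ k ∈ range (n + 1), T k = ∑ k ∈ range (n + 1), T (k + 1) + 1 := by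
      have h₀ : T 0 = 1 := by simp [T]
      have hn : T (n + 1) = 0 := by simp [T, gaussBinom_eq_zero_of_lt]
      rw [← h₀, ← sum_range_succ', sum_range_succ _ (n + 1), hn, add_zero]
    calc ∏ i ∈ range (n + 1), (1 + u * q ^ i)
        = (1 + u) * ∏ i ∈ range n, (1 + (u * q) * q ^ i) := by
          rw [prod_range_succ', mul_comm, pow_zero, mul_one]
          exact congrArg _ (prod_congr rfl fun i _ => by ring)
      _ = ∑ k ∈ range (n + 1), T k + ∑ k ∈ range (n + 1), V k := by
          rw [ih, mul_sum, ← sum_add_distrib]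
          refine sum_congr rfl fun k _ => ?_
          simp only [T, V, Nat.choose_two_succ]
          ring
      _ = ∑ k ∈ range (n + 1), (T (k + 1) + V k) + 1 := by
          rw [hT, sum_add_distrib]; ring
      _ = ∑ k ∈ range (n + 1 + 1), gaussBinom q (n + 1) k * q ^ k.choose 2 * u ^ k := by
          rw [sum_range_succ' _ (n + 1)]
          refine congrArg₂ _ (sum_congr rfl fun k _ => ?_) (by simp)
          simp only [T, V, gaussBinom_succ_succ, Nat.choose_two_succ (k + 1)]
          ring

end CommSemiring

section CommRing

variable [CommRing R] (q : R)

@[simp] lemma qPoch_zero : qPoch q 0 = 1 := prod_range_zero _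

lemma qPoch_succ (n : ℕ) : qPoch q (n + 1) = qPoch q n * (1 - q ^ (n + 1)) :=
  prod_range_succ _ _

lemma gaussBinom_mul_qPoch_mul_qPoch (m k : ℕ) :
    gaussBinom q (m + k) k * qPoch q m * qPoch q k = qPoch q (m + k) := by
  induction k generalizing m with
  | zero => simp
  | succ k ih =>
    induction m with
    | zero =>
      have h := ih 0
      simp only [zero_add, qPoch_zero, mul_one] at h ⊢
      rw [gaussBinom_succ_succ, gaussBinom_eq_zero_of_lt q k.lt_succ_self, qPoch_succ]
      linear_combination (1 - q ^ (k + 1)) * h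
    | succ m ihm =>
      have h := ih (m + 1)
      rw [show m + 1 + k = m + (k + 1) by omega, qPoch_succ q m] at h
      rw [qPoch_succ q k] at ihm
      rw [show m + 1 + (k + 1) = m + (k + 1) + 1 by omega, gaussBinom_succ_succ,
        qPoch_succ q (m + (k + 1)), qPoch_succ q m, qPoch_succ q k]
      linear_combination (1 - q ^ (k + 1)) * h + q ^ (k + 1) * (1 - q ^ (m + 1)) * ihm

end CommRing

/-- `centralGaussBinom q n j` is the Gaussian binomial coefficient `[2n, n + j]_q`. -/
def centralGaussBinom [CommSemiring R] (q : R) (n : ℕ) (j : ℤ) : R :=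
  if j.natAbs ≤ n then gaussBinom q (2 * n) (j + n).toNat else 0

end GaussBinom

section QPochInf

variable {q : ℂ}

lemma summable_norm_mul_pow (hq : ‖q‖ < 1) (a : ℂ) : Summable fun n : ℕ => ‖a * q ^ n‖ := by
  simpa [norm_pow] using (summable_geometric_of_lt_one (norm_nonneg q) hq).mul_left ‖a‖

lemma multipliable_one_sub_mul_pow (hq : ‖q‖ < 1) (a : ℂ) :
    Multipliable fun n : ℕ => 1 - a * q ^ n := by
  simpa [sub_eq_add_neg] using
    multipliable_one_add_of_summable (by simpa using summable_norm_mul_pow hq a)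

lemma tendsto_prod_range_qPochInf (hq : ‖q‖ < 1) (a : ℂ) :
    Tendsto (fun N => ∏ n ∈ range N, (1 - a * q ^ n)) atTop (𝓝 (qPochInf a q)) :=
  (multipliable_one_sub_mul_pow hq a).hasProd.tendsto_prod_nat

lemma tendsto_qPoch (hq : ‖q‖ < 1) : Tendsto (qPoch q) atTop (𝓝 (qPochInf q q)) :=
  (tendsto_prod_range_qPochInf hq q).congr fun _ => prod_congr rfl fun _ _ => by ring

lemma one_sub_pow_succ_ne_zero (hq : ‖q‖ < 1) (n : ℕ) : 1 - q ^ (n + 1) ≠ 0 := by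
  rw [sub_ne_zero, ne_comm]
  refine ne_of_apply_ne norm (ne_of_lt ?_)
  simpa using pow_lt_one₀ (norm_nonneg q) hq n.succ_ne_zero

lemma qPoch_ne_zero (hq : ‖q‖ < 1) (n : ℕ) : qPoch q n ≠ 0 :=
  prod_ne_zero_iff.2 fun i _ => one_sub_pow_succ_ne_zero hq i

lemma qPochInf_self_ne_zero (hq : ‖q‖ < 1) : qPochInf q q ≠ 0 := by
  have := tprod_one_add_ne_zero_of_summable (f := fun n : ℕ => -(q * q ^ n))
    (fun n => by simpa [← sub_eq_add_neg, ← pow_succ'] using one_sub_pow_succ_ne_zero hq n)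
    (by simpa using summable_norm_mul_pow hq q)
  simpa [qPochInf, ← sub_eq_add_neg] using this

lemma qPochInf_zero_right (a : ℂ) : qPochInf a 0 = 1 - a := by
  rw [qPochInf, tprod_eq_mulSingle 0 fun n hn => by simp [hn]]
  simp

lemma theta_zero_right (z : ℂ) : theta z 0 = 1 - z := by
  simp [theta, qPochInf_zero_right]

lemma tendsto_prod_range_theta (hq : ‖q‖ < 1) (z : ℂ) :
    Tendsto (fun n => ∏ i ∈ range n, ((1 - z * q ^ i) * (1 - q * z⁻¹ * q ^ i))) atTop
      (𝓝 (theta z q)) := by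
  simp only [prod_mul_distrib]
  exact (tendsto_prod_range_qPochInf hq z).mul (tendsto_prod_range_qPochInf hq (q * z⁻¹))

lemma centralGaussBinom_of_natAbs_le (hq : ‖q‖ < 1) {n : ℕ} {j : ℤ} (hj : j.natAbs ≤ n) :
    centralGaussBinom q n j =
      qPoch q (2 * n) * (qPoch q (n - j).toNat)⁻¹ * (qPoch q (j + n).toNat)⁻¹ := by
  have h := gaussBinom_mul_qPoch_mul_qPoch q (n - j).toNat (j + n).toNat
  rw [show (n - j).toNat + (j + n).toNat = 2 * n by omega] at h
  rw [centralGaussBinom, if_pos hj, ← h]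
  field_simp [qPoch_ne_zero hq]

lemma tendsto_centralGaussBinom (hq : ‖q‖ < 1) (j : ℤ) :
    Tendsto (fun n => centralGaussBinom q n j) atTop (𝓝 (qPochInf q q)⁻¹) := by
  have hL := qPochInf_self_ne_zero hq
  have hev : (fun n : ℕ => qPoch q (2 * n) * (qPoch q (n - j).toNat)⁻¹ *
      (qPoch q (j + n).toNat)⁻¹) =ᶠ[atTop] fun n => centralGaussBinom q n j := by
    filter_upwards [eventually_ge_atTop j.natAbs] with n hn
    rw [centralGaussBinom_of_natAbs_le hq hn]
  have hlim : ∀ f : ℕ → ℕ, (∀ n, n - j.natAbs ≤ f n) →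
      Tendsto (fun n => qPoch q (f n)) atTop (𝓝 (qPochInf q q)) := fun f hf =>
    (tendsto_qPoch hq).comp <|
      tendsto_atTop_atTop.2 fun b => ⟨b + j.natAbs, fun n hn => by have := hf n; omega⟩
  refine Tendsto.congr' hev ?_
  convert ((hlim _ fun n => ?_).mul ((hlim _ fun n => ?_).inv₀ hL)).mul
    ((hlim _ fun n => ?_).inv₀ hL) using 2
  · rw [mul_inv_cancel₀ hL, one_mul]
  all_goals omega

lemma exists_norm_centralGaussBinom_le (hq : ‖q‖ < 1) :
    ∃ C, ∀ n j, ‖centralGaussBinom q n j‖ ≤ C := by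
  obtain ⟨A, hA⟩ := (tendsto_qPoch hq).norm.bddAbove_range
  obtain ⟨B, hB⟩ := ((tendsto_qPoch hq).inv₀ (qPochInf_self_ne_zero hq)).norm.bddAbove_range
  have hA₀ : 0 ≤ A := (norm_nonneg _).trans (hA ⟨0, rfl⟩)
  have hB₀ : 0 ≤ B := (norm_nonneg _).trans (hB ⟨0, rfl⟩)
  refine ⟨A * B * B, fun n j => ?_⟩
  by_cases hn : j.natAbs ≤ n
  · rw [centralGaussBinom_of_natAbs_le hq hn, norm_mul, norm_mul]
    gcongr
    exacts [hA ⟨_, rfl⟩, hB ⟨_, rfl⟩, hB ⟨_, rfl⟩]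
  · rw [centralGaussBinom, if_neg hn, norm_zero]
    positivity

end QPochInf

section ThetaSeries

noncomputable def thetaTerm (q z : ℂ) (j : ℤ) : ℂ := (-1) ^ j * q ^ Ring.choose j 2 * z ^ j

noncomputable def thetaSeries (q z : ℂ) : ℂ := ∑' j : ℤ, thetaTerm q z j

lemma norm_thetaTerm (q z : ℂ) (j : ℤ) :
    ‖thetaTerm q z j‖ = ‖q‖ ^ Ring.choose j 2 * ‖z‖ ^ j := by
  simp [thetaTerm]

lemma summable_pow_choose_two_mul_pow {r s : ℝ} (hr₀ : 0 < r) (hr : r < 1) (hs : 0 < s) :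
    Summable fun n : ℕ => r ^ n.choose 2 * s ^ n := by
  refine summable_of_ratio_test_tendsto_lt_one zero_lt_one
    (Eventually.of_forall fun n => by positivity) ?_
  have hratio : ∀ n : ℕ,
      ‖r ^ (n + 1).choose 2 * s ^ (n + 1)‖ / ‖r ^ n.choose 2 * s ^ n‖ = r ^ n * s := by
    intro n
    rw [Real.norm_of_nonneg (by positivity), Real.norm_of_nonneg (by positivity),
      Nat.choose_two_succ]
    field_simp
    ring
  simp_rw [hratio]
  simpa using (tendsto_pow_atTop_nhds_zero_of_lt_one hr₀.le hr).mul_const s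

variable {q z : ℂ}

lemma summable_norm_thetaTerm (hq₀ : q ≠ 0) (hq : ‖q‖ < 1) (hz : z ≠ 0) :
    Summable fun j => ‖thetaTerm q z j‖ := by
  have hr := norm_pos_iff.2 hq₀
  have hs := norm_pos_iff.2 hz
  refine Summable.of_nat_of_neg ?_ ?_
  · simpa [norm_thetaTerm, Ring.choose_natCast] using summable_pow_choose_two_mul_pow hr hq hs
  · refine (summable_pow_choose_two_mul_pow hr hq (div_pos hr hs)).congr fun n => ?_
    rw [norm_thetaTerm, ringChoose_two_neg, Ring.choose_natCast, zpow_add₀ hr.ne', zpow_neg,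
      div_pow]
    simp
    field_simp

lemma prod_range_one_sub_mul_inv_pow (hq₀ : q ≠ 0) (hz : z ≠ 0) (n : ℕ) :
    ∏ i ∈ range n, (1 - z * q⁻¹ ^ (i + 1)) =
      (-z) ^ n * q⁻¹ ^ (n + 1).choose 2 * ∏ i ∈ range n, (1 - q * z⁻¹ * q ^ i) := by
  have h : ∀ i : ℕ, 1 - z * q⁻¹ ^ (i + 1) = (-z * q⁻¹ ^ (i + 1)) * (1 - q * z⁻¹ * q ^ i) := by
    intro i
    rw [inv_pow]
    field_simp
    ring
  rw [prod_congr rfl fun i _ => h i, prod_mul_distrib, prod_mul_distrib, prod_const, card_range,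
    prod_pow_eq_pow_sum, sum_range_add_one_eq_choose_two]

lemma prod_range_two_mul_one_add_mul_pow (hq₀ : q ≠ 0) (hz : z ≠ 0) (n : ℕ) :
    ∏ i ∈ range (2 * n), (1 + (-z * q⁻¹ ^ n) * q ^ i) =
      (-z) ^ n * q⁻¹ ^ (n + 1).choose 2 *
        ∏ i ∈ range n, ((1 - z * q ^ i) * (1 - q * z⁻¹ * q ^ i)) := by
  have h₁ : ∀ i ∈ range n, 1 + (-z * q⁻¹ ^ n) * q ^ (n - 1 - i) = 1 - z * q⁻¹ ^ (i + 1) := by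
    intro i hi
    have e : q ^ n = q ^ (n - 1 - i) * q ^ (i + 1) := by
      rw [← pow_add]; congr 1; have := mem_range.1 hi; omega
    rw [inv_pow, inv_pow, e]
    field_simp
    ring
  have h₂ : ∀ i ∈ range n, 1 + (-z * q⁻¹ ^ n) * q ^ (n + i) = 1 - z * q ^ i := by
    intro i _
    rw [pow_add, inv_pow]
    field_simp
    ring
  rw [two_mul, prod_range_add, ← prod_range_reflect, prod_mul_distrib, prod_congr rfl h₁,
    prod_congr rfl h₂, prod_range_one_sub_mul_inv_pow hq₀ hz]
  ring

/-- Finite form of the Jacobi triple product: the `q`-binomial theorem at `u = -z q⁻ⁿ`. -/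
theorem prod_range_theta_eq_sum (hq₀ : q ≠ 0) (hz : z ≠ 0) (n : ℕ) :
    ∏ i ∈ range n, ((1 - z * q ^ i) * (1 - q * z⁻¹ * q ^ i)) =
      ∑ k ∈ range (2 * n + 1), gaussBinom q (2 * n) k * thetaTerm q z (k - n) := by
  have hc : (-z) ^ n * q⁻¹ ^ (n + 1).choose 2 ≠ 0 := by simp [hq₀, hz]
  have hterm : ∀ k : ℕ, q ^ k.choose 2 * (-z * q⁻¹ ^ n) ^ k =
      (-z) ^ n * q⁻¹ ^ (n + 1).choose 2 * thetaTerm q z (k - n) := by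
    intro k
    rw [thetaTerm, ringChoose_two_natCast_sub]
    simp only [zpow_add₀ hq₀, zpow_sub₀ hq₀, zpow_sub₀ hz, zpow_natCast,
      zpow_sub₀ (neg_ne_zero.2 one_ne_zero : (-1 : ℂ) ≠ 0), inv_pow, mul_pow, pow_mul]
    field_simp
    ring
  apply mul_left_cancel₀ hc
  rw [← prod_range_two_mul_one_add_mul_pow hq₀ hz, prod_range_one_add_mul_pow, mul_sum]
  exact sum_congr rfl fun k _ => by rw [mul_assoc, hterm, mul_left_comm]

lemma prod_range_theta_eq_tsum (hq₀ : q ≠ 0) (hz : z ≠ 0) (n : ℕ) :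
    ∏ i ∈ range n, ((1 - z * q ^ i) * (1 - q * z⁻¹ * q ^ i)) =
      ∑' j, centralGaussBinom q n j * thetaTerm q z j := by
  rw [prod_range_theta_eq_sum hq₀ hz, tsum_eq_sum (s := Icc (-n : ℤ) n) fun j hj => ?_]
  · refine sum_nbij' (fun k => (k : ℤ) - n) (fun j => (j + n).toNat) ?_ ?_ ?_ ?_ ?_ <;>
      intro k hk <;> simp only [mem_range, mem_Icc] at hk ⊢
    · omega
    · omega
    · omega
    · omega
    · rw [centralGaussBinom, if_pos (by omega), show ((k : ℤ) - n + n).toNat = k by omega]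
  · rw [mem_Icc] at hj
    rw [centralGaussBinom, if_neg (by omega), zero_mul]

/-- The Jacobi triple product. -/
theorem theta_mul_qPochInf (hq₀ : q ≠ 0) (hq : ‖q‖ < 1) (hz : z ≠ 0) :
    theta z q * qPochInf q q = thetaSeries q z := by
  obtain ⟨C, hC⟩ := exists_norm_centralGaussBinom_le hq
  have hlim := tendsto_tsum_of_dominated_convergence
    ((summable_norm_thetaTerm hq₀ hq hz).mul_left C)
    (fun j => (tendsto_centralGaussBinom hq j).mul_const (thetaTerm q z j))
    (Eventually.of_forall fun n j => by rw [norm_mul]; gcongr; exact hC n j)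
  rw [tsum_mul_left, ← funext (prod_range_theta_eq_tsum hq₀ hz)] at hlim
  rw [tendsto_nhds_unique (tendsto_prod_range_theta hq z) hlim, thetaSeries, mul_comm,
    mul_inv_cancel_left₀ (qPochInf_self_ne_zero hq)]

end ThetaSeries

section AdditionFormula

variable {q : ℂ}

/-- The terms of `thetaSeries q (u * v) * thetaSeries q (u / v)`, indexed by `(a + b, a - b)`. -/
noncomputable def pairTerm (q u v : ℂ) (mn : ℤ × ℤ) : ℂ :=
  if Even (mn.1 - mn.2) then
    (-1) ^ mn.1 * q ^ ((mn.1 ^ 2 + mn.2 ^ 2 - 2 * mn.1) / 4) * u ^ mn.1 * v ^ mn.2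
  else 0

def sumDiff (ab : ℤ × ℤ) : ℤ × ℤ := (ab.1 + ab.2, ab.1 - ab.2)

lemma sumDiff_injective : Function.Injective sumDiff := by
  rintro ⟨a, b⟩ ⟨c, d⟩ h
  simp only [sumDiff, Prod.mk.injEq] at h ⊢
  omega

lemma four_dvd_of_even_sub {m n : ℤ} (h : Even (m - n)) : 4 ∣ m ^ 2 + n ^ 2 - 2 * m := by
  obtain ⟨k, hk⟩ := h
  obtain ⟨r, hr⟩ := Int.even_mul_pred_self n
  obtain rfl : m = n + 2 * k := by omega
  exact ⟨r + n * k + k ^ 2 - k, by linear_combination 2 * hr⟩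

lemma pairTerm_sumDiff (hq₀ : q ≠ 0) {u v : ℂ} (hu : u ≠ 0) (hv : v ≠ 0) (ab : ℤ × ℤ) :
    pairTerm q u v (sumDiff ab) = thetaTerm q (u * v) ab.1 * thetaTerm q (u / v) ab.2 := by
  obtain ⟨a, b⟩ := ab
  have hexp : ((a + b) ^ 2 + (a - b) ^ 2 - 2 * (a + b)) / 4 =
      Ring.choose a 2 + Ring.choose b 2 := by
    rw [show (a + b) ^ 2 + (a - b) ^ 2 - 2 * (a + b) = 4 * (Ring.choose a 2 + Ring.choose b 2) by
      linear_combination (-2) * two_mul_ringChoose_two a - 2 * two_mul_ringChoose_two b]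
    exact Int.mul_ediv_cancel_left _ four_ne_zero
  rw [sumDiff, pairTerm, if_pos (by simp), hexp, thetaTerm, thetaTerm]
  simp only [zpow_add₀ hq₀, zpow_add₀ hu, zpow_sub₀ hv,
    zpow_add₀ (neg_ne_zero.2 one_ne_zero : (-1 : ℂ) ≠ 0), mul_zpow, div_zpow]
  field_simp

lemma pairTerm_eq_zero_of_notMem_range {u v : ℂ} {mn : ℤ × ℤ} (h : mn ∉ Set.range sumDiff) :
    pairTerm q u v mn = 0 := by
  refine if_neg fun ⟨k, hk⟩ => h ⟨(mn.1 - k, k), ?_⟩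
  ext <;> simp only [sumDiff] <;> omega

lemma summable_norm_pairTerm (hq₀ : q ≠ 0) (hq : ‖q‖ < 1) {u v : ℂ} (hu : u ≠ 0) (hv : v ≠ 0) :
    Summable fun mn => ‖pairTerm q u v mn‖ := by
  refine (sumDiff_injective.summable_iff fun mn h => ?_).1 ?_
  · rw [pairTerm_eq_zero_of_notMem_range h, norm_zero]
  · refine ((summable_norm_thetaTerm hq₀ hq (mul_ne_zero hu hv)).mul_norm
      (summable_norm_thetaTerm hq₀ hq (div_ne_zero hu hv))).congr fun ab => ?_
    rw [Function.comp_apply, pairTerm_sumDiff hq₀ hu hv]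

lemma thetaSeries_mul_thetaSeries (hq₀ : q ≠ 0) (hq : ‖q‖ < 1) {u v : ℂ} (hu : u ≠ 0)
    (hv : v ≠ 0) :
    thetaSeries q (u * v) * thetaSeries q (u / v) = ∑' mn, pairTerm q u v mn := by
  rw [thetaSeries, thetaSeries, tsum_mul_tsum_of_summable_norm
    (summable_norm_thetaTerm hq₀ hq (mul_ne_zero hu hv))
    (summable_norm_thetaTerm hq₀ hq (div_ne_zero hu hv)),
    ← sumDiff_injective.tsum_eq (f := pairTerm q u v)
      (Function.support_subset_iff'.2 fun _ => pairTerm_eq_zero_of_notMem_range)]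
  exact tsum_congr fun ab => (pairTerm_sumDiff hq₀ hu hv ab).symm

lemma hasSum_pairTerm_mul_pairTerm (hq₀ : q ≠ 0) (hq : ‖q‖ < 1) {u v u' v' : ℂ} (hu : u ≠ 0)
    (hv : v ≠ 0) (hu' : u' ≠ 0) (hv' : v' ≠ 0) :
    HasSum (fun p : (ℤ × ℤ) × (ℤ × ℤ) => pairTerm q u v p.1 * pairTerm q u' v' p.2)
      (thetaSeries q (u * v) * thetaSeries q (u / v) *
        (thetaSeries q (u' * v') * thetaSeries q (u' / v'))) := by
  have hs := summable_norm_pairTerm hq₀ hq hu hv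
  have hs' := summable_norm_pairTerm hq₀ hq hu' hv'
  rw [thetaSeries_mul_thetaSeries hq₀ hq hu hv, thetaSeries_mul_thetaSeries hq₀ hq hu' hv',
    tsum_mul_tsum_of_summable_norm hs hs']
  exact (summable_mul_of_summable_norm hs hs').hasSum

lemma pairTerm_mul_pairTerm (hq₀ : q ≠ 0) (u v u' v' : ℂ) (a b c d : ℤ) :
    pairTerm q u v (a, b) * pairTerm q u' v' (c, d) =
      (if Even (a - b) ∧ Even (c - d) then (-1) ^ (a + c) else 0) *
        q ^ ((a ^ 2 + b ^ 2 + c ^ 2 + d ^ 2 - 2 * a - 2 * c) / 4) *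
          (u ^ a * v ^ b * u' ^ c * v' ^ d) := by
  simp only [pairTerm]
  by_cases h₁ : Even (a - b); swap
  · simp [h₁]
  by_cases h₂ : Even (c - d); swap
  · simp [h₂]
  rw [if_pos h₁, if_pos h₂, if_pos ⟨h₁, h₂⟩,
    show a ^ 2 + b ^ 2 + c ^ 2 + d ^ 2 - 2 * a - 2 * c =
      (a ^ 2 + b ^ 2 - 2 * a) + (c ^ 2 + d ^ 2 - 2 * c) by ring,
    Int.add_ediv_of_dvd_left (four_dvd_of_even_sub h₁), zpow_add₀ hq₀,
    zpow_add₀ (neg_ne_zero.2 one_ne_zero : (-1 : ℂ) ≠ 0)]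
  ring

/-- All three products are multiples of `q ^ (N / 4) * x ^ X * y ^ (Y + 1) * w ^ (W - 1) * z ^ Z`;
only the signs and parity conditions differ. -/
lemma pairTerm_addition_formula (hq₀ : q ≠ 0) {x y w z : ℂ} (hy : y ≠ 0) (hw : w ≠ 0)
    (X Y W Z : ℤ) :
    pairTerm q x w (X, W - 1) * pairTerm q y z (Y + 1, Z) -
        pairTerm q x z (X, Z) * pairTerm q y w (Y + 1, W - 1) =
      y / w * (pairTerm q x y (X, Y) * pairTerm q w z (W, Z)) := by
  set N := X ^ 2 + Y ^ 2 + W ^ 2 + Z ^ 2 - 2 * X - 2 * W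
  have hsign : ((if Even (X - (W - 1)) ∧ Even (Y + 1 - Z) then (-1 : ℂ) ^ (X + (Y + 1)) else 0) -
      if Even (X - Z) ∧ Even (Y + 1 - (W - 1)) then (-1 : ℂ) ^ (X + (Y + 1)) else 0) =
      if Even (X - Y) ∧ Even (W - Z) then (-1 : ℂ) ^ (X + W) else 0 := by
    simp only [neg_one_zpow_eq_ite, Int.even_add, Int.even_sub]
    by_cases hX : Even X <;> by_cases hY : Even Y <;> by_cases hW : Even W <;>
      by_cases hZ : Even Z <;> simp [hX, hY, hW, hZ]
  have hmono : y / w * (x ^ X * y ^ Y * w ^ W * z ^ Z) =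
      x ^ X * w ^ (W - 1) * y ^ (Y + 1) * z ^ Z := by
    rw [zpow_sub_one₀ hw, zpow_add_one₀ hy]
    field_simp
  rw [pairTerm_mul_pairTerm hq₀, pairTerm_mul_pairTerm hq₀, pairTerm_mul_pairTerm hq₀,
    show X ^ 2 + (W - 1) ^ 2 + (Y + 1) ^ 2 + Z ^ 2 - 2 * X - 2 * (Y + 1) = N by ring,
    show X ^ 2 + Z ^ 2 + (Y + 1) ^ 2 + (W - 1) ^ 2 - 2 * X - 2 * (Y + 1) = N by ring]
  linear_combination (q ^ (N / 4) * (x ^ X * w ^ (W - 1) * y ^ (Y + 1) * z ^ Z)) * hsign -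
    (if Even (X - Y) ∧ Even (W - Z) then (-1 : ℂ) ^ (X + W) else 0) * q ^ (N / 4) * hmono

-- Reindexings aligning the terms of the two products on the left of the addition formula with
-- those on the right, as in `pairTerm_addition_formula`.
def pairReindex₁ : (ℤ × ℤ) × (ℤ × ℤ) ≃ (ℤ × ℤ) × (ℤ × ℤ) where
  toFun p := ((p.1.1, p.2.1 - 1), (p.1.2 + 1, p.2.2))
  invFun p := ((p.1.1, p.2.1 - 1), (p.1.2 + 1, p.2.2))
  left_inv _ := by simp
  right_inv _ := by simp

def pairReindex₂ : (ℤ × ℤ) × (ℤ × ℤ) ≃ (ℤ × ℤ) × (ℤ × ℤ) where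
  toFun p := ((p.1.1, p.2.2), (p.1.2 + 1, p.2.1 - 1))
  invFun p := ((p.1.1, p.2.1 - 1), (p.2.2 + 1, p.1.2))
  left_inv _ := by simp
  right_inv _ := by simp

theorem thetaSeries_addition_formula (hq₀ : q ≠ 0) (hq : ‖q‖ < 1) {x y w z : ℂ} (hx : x ≠ 0)
    (hy : y ≠ 0) (hw : w ≠ 0) (hz : z ≠ 0) :
    thetaSeries q (x * w) * thetaSeries q (x / w) *
          (thetaSeries q (y * z) * thetaSeries q (y / z)) -
        thetaSeries q (x * z) * thetaSeries q (x / z) *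
          (thetaSeries q (y * w) * thetaSeries q (y / w)) =
      y / w * (thetaSeries q (x * y) * thetaSeries q (x / y) *
        (thetaSeries q (w * z) * thetaSeries q (w / z))) := by
  have h₁ := pairReindex₁.hasSum_iff.2 (hasSum_pairTerm_mul_pairTerm hq₀ hq hx hw hy hz)
  have h₂ := pairReindex₂.hasSum_iff.2 (hasSum_pairTerm_mul_pairTerm hq₀ hq hx hz hy hw)
  have h₃ := (hasSum_pairTerm_mul_pairTerm hq₀ hq hx hy hw hz).mul_left (y / w)
  exact (h₁.sub h₂).unique
    (h₃.congr_fun fun p => pairTerm_addition_formula hq₀ hy hw p.1.1 p.1.2 p.2.1 p.2.2)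

end AdditionFormula

/-- The fundamental addition formula for theta functions:
`θ(xw)θ(x/w)θ(yz)θ(y/z) − θ(xz)θ(x/z)θ(yw)θ(y/w) = (y/w)·θ(xy)θ(x/y)θ(wz)θ(w/z)`. -/
theorem theta_addition_formula (p : ℂ) (hp : ‖p‖ < 1)
    (x y w z : ℂ) (hx : x ≠ 0) (hy : y ≠ 0) (hw : w ≠ 0) (hz : z ≠ 0) :
    theta (x * w) p * theta (x / w) p * theta (y * z) p * theta (y / z) p
      - theta (x * z) p * theta (x / z) p * theta (y * w) p * theta (y / w) p
      = y / w * (theta (x * y) p * theta (x / y) p * theta (w * z) p * theta (w / z) p) := by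
  rcases eq_or_ne p 0 with rfl | hp₀
  · simp only [theta_zero_right]
    field_simp
    ring
  have hθ : ∀ u ≠ 0, theta u p = (qPochInf p p)⁻¹ * thetaSeries p u := fun u hu => by
    rw [← theta_mul_qPochInf hp₀ hp hu]
    field_simp [qPochInf_self_ne_zero hp]
  simp (disch := simp [*]) only [hθ]
  linear_combination (qPochInf p p)⁻¹ ^ 4 * thetaSeries_addition_formula hp₀ hp hx hy hw hz
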